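/- arXiv:1802.04447 — 2 statements merged into one kernel-verified Lean document; each statement's English description precedes it below -/
import Mathlib

section
/- Let W ∈ ℝ^{N×N} be a symmetric matrix with nonnegative entries and positive degrees, and suppose there is a partition of {1,…,N} into n nonempty sets such that w(i)/d(i) = w(j)/d(j) whenever i, j lie in the same part (w(i) the i-th row of W, d(i) its row sum). Then the matrix D^{-1} W has rank at most n; consequently the random-walk Laplacian I_N − D^{-1} W (and hence the normalized Laplacian) has eigenvalue 1 with multiplicity at least N − n. -/
/-! Equal normalized rows within a part make every row of `D⁻¹W` the row of a representative of
its part, so `D⁻¹W` factors through `ℝⁿ` and has rank at most `n`. Its kernel, of dimension at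
least `N - n`, is the `1`-eigenspace of `I - D⁻¹W`, and a geometric multiplicity bounds the
algebraic one. Finally `L = D^{1/2} (I - D⁻¹W) D^{-1/2}` has the same characteristic polynomial. -/

open Matrix BigOperators

noncomputable section

/-- Degree of node `i`: the `i`-th row sum of the weight matrix. -/
def deg {N : ℕ} (W : Matrix (Fin N) (Fin N) ℝ) (i : Fin N) : ℝ := ∑ j, W i j

/-- `D^{-1/2}`: the diagonal matrix of inverse square roots of degrees. -/
def invSqrtDeg {N : ℕ} (W : Matrix (Fin N) (Fin N) ℝ) : Matrix (Fin N) (Fin N) ℝ :=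
  Matrix.diagonal fun i => (Real.sqrt (deg W i))⁻¹

/-- Normalized Laplacian `L = I - D^{-1/2} W D^{-1/2}`. -/
def normLap {N : ℕ} (W : Matrix (Fin N) (Fin N) ℝ) : Matrix (Fin N) (Fin N) ℝ :=
  1 - invSqrtDeg W * W * invSqrtDeg W

/-- Random-walk transition matrix `D^{-1} W`. -/
def rwMat {N : ℕ} (W : Matrix (Fin N) (Fin N) ℝ) : Matrix (Fin N) (Fin N) ℝ :=
  Matrix.diagonal (fun i => (deg W i)⁻¹) * W

/-- The 0/1 partition matrix `P` of the partition encoded by `f` (node `i` lies in part `f i`). -/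
def partMat {N n : ℕ} (f : Fin N → Fin n) : Matrix (Fin n) (Fin N) ℝ :=
  fun p i => if f i = p then 1 else 0

/-- Size `|S_p|` of the part `p`. -/
def partSize {N n : ℕ} (f : Fin N → Fin n) (p : Fin n) : ℕ :=
  (Finset.univ.filter fun i => f i = p).card

/-- Coarse adjacency matrix `W_c = P W Pᵀ`. -/
def coarse {N n : ℕ} (f : Fin N → Fin n) (W : Matrix (Fin N) (Fin N) ℝ) :
    Matrix (Fin n) (Fin n) ℝ :=
  partMat f * W * (partMat f)ᵀ

/-- Lifted adjacency matrix `W_l(i,j) = W_c(f i, f j) / (|S_{f i}|·|S_{f j}|)`. -/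
def liftG {N n : ℕ} (f : Fin N → Fin n) (W : Matrix (Fin N) (Fin N) ℝ) :
    Matrix (Fin N) (Fin N) ℝ :=
  fun i j => coarse f W (f i) (f j) / ((partSize f (f i) : ℝ) * (partSize f (f j) : ℝ))

/-- Normalized coarsening matrix `C` with `C(p,i) = 1/√|S_p|` iff `i ∈ S_p`. -/
def coarsenMat {N n : ℕ} (f : Fin N → Fin n) : Matrix (Fin n) (Fin N) ℝ :=
  fun p i => if f i = p then (Real.sqrt (partSize f p : ℝ))⁻¹ else 0

/-- Pseudo-inverse `P⁺` of the partition matrix, `P⁺(i,p) = 1/|S_p|` iff `i ∈ S_p`. -/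
def pinvMat {N n : ℕ} (f : Fin N → Fin n) : Matrix (Fin N) (Fin n) ℝ :=
  fun i p => if f i = p then ((partSize f p : ℝ))⁻¹ else 0

/-- `μ` lists the eigenvalues of `A` in nondecreasing order (with multiplicity):
`μ` is monotone and the characteristic polynomial of `A` splits as `∏ (X - μ i)`. -/
def sortedEigs {m : ℕ} (A : Matrix (Fin m) (Fin m) ℝ) (μ : Fin m → ℝ) : Prop :=
  Monotone μ ∧ A.charpoly = ∏ i, (Polynomial.X - Polynomial.C (μ i))

/-- Squared Frobenius norm of a matrix. -/
def frobSq {a b : ℕ} (M : Matrix (Fin a) (Fin b) ℝ) : ℝ := ∑ i, ∑ j, (M i j) ^ 2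

/-- Partial spectral distance between sorted spectra `μ` (original, size `N`) and
`μc` (coarse, size `n`): `∑_{i=1}^k |μ(i) - μc(i)| + ∑_{i=k+1}^n |μc(i) - μ(i+N-n)|`,
where `k` is the largest index with `μc k < 1` (for monotone `μc`). -/
def SDpart {N n : ℕ} (h : n ≤ N) (μ : Fin N → ℝ) (μc : Fin n → ℝ) : ℝ :=
  ∑ i : Fin n,
    if μc i < 1 then |μ (Fin.castLE h i) - μc i|
    else |μc i - μ ⟨i.1 + N - n, by have := i.2; omega⟩|


namespace Matrix

variable {ι m o K : Type*} [Fintype ι]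

theorem rank_le_card_of_rows_eq_on_fibers {R : Type*} [CommSemiring R] [StrongRankCondition R]
    [Fintype m] [Fintype o] (M : Matrix m o R) (f : m → ι) (hf : Function.Surjective f)
    (hrow : ∀ i j, f i = f j → M i = M j) : M.rank ≤ Fintype.card ι := by
  have hM : M = (M.submatrix (Function.surjInv hf) id).submatrix f id := by
    ext i k
    exact congrFun (hrow _ _ (Function.surjInv_eq hf (f i))).symm k
  rw [hM]
  exact (rank_submatrix_le _ _ _).trans (rank_le_card_height _)

theorem card_sub_rank_le_rootMultiplicity_scalar_sub [DecidableEq ι] [Field K]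
    (M : Matrix ι ι K) (μ : K) :
    Fintype.card ι - M.rank ≤ (scalar ι μ - M).charpoly.rootMultiplicity μ := by
  have hker :
      Module.End.eigenspace (toLin' (scalar ι μ - M)) μ = LinearMap.ker M.mulVecLin := by
    ext v
    simp [Module.End.eigenspace_def]
  have hnullity := LinearMap.finrank_range_add_finrank_ker M.mulVecLin
  rw [Module.finrank_fintype_fun_eq_card] at hnullity
  have hgeom := LinearMap.finrank_eigenspace_le (toLin' (scalar ι μ - M)) μ
  rw [hker, charpoly_toLin'] at hgeom
  change M.rank + _ = _ at hnullity
  omega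

theorem charpoly_mul_mul_of_mul_eq_one [DecidableEq ι] {R : Type*} [CommRing R]
    (S A T : Matrix ι ι R) (hTS : T * S = 1) : (S * A * T).charpoly = A.charpoly := by
  rw [Matrix.mul_assoc, charpoly_mul_comm, Matrix.mul_assoc, hTS, Matrix.mul_one]

end Matrix

section Graph

variable {N : ℕ} (W : Matrix (Fin N) (Fin N) ℝ)

def sqrtDeg : Matrix (Fin N) (Fin N) ℝ :=
  diagonal fun i => √(deg W i)

theorem rwMat_apply (i k : Fin N) : rwMat W i k = W i k / deg W i := by
  simp [rwMat, diagonal_mul, div_eq_inv_mul]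

theorem rank_rwMat_le {n : ℕ} (f : Fin N → Fin n) (hsurj : Function.Surjective f)
    (hsame : ∀ i j, f i = f j → ∀ k, W i k / deg W i = W j k / deg W j) :
    (rwMat W).rank ≤ n := by
  simpa using rank_le_card_of_rows_eq_on_fibers (rwMat W) f hsurj fun i j hij =>
    funext fun k => by simp only [rwMat_apply, hsame i j hij k]

theorem invSqrtDeg_mul_sqrtDeg (hdeg : ∀ i, 0 < deg W i) :
    invSqrtDeg W * sqrtDeg W = 1 := by
  rw [invSqrtDeg, sqrtDeg, diagonal_mul_diagonal, ← diagonal_one]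
  exact congrArg diagonal (funext fun i => inv_mul_cancel₀ (Real.sqrt_pos.mpr (hdeg i)).ne')

theorem sqrtDeg_mul_invSqrtDeg (hdeg : ∀ i, 0 < deg W i) :
    sqrtDeg W * invSqrtDeg W = 1 := by
  rw [invSqrtDeg, sqrtDeg, diagonal_mul_diagonal, ← diagonal_one]
  exact congrArg diagonal (funext fun i => mul_inv_cancel₀ (Real.sqrt_pos.mpr (hdeg i)).ne')

theorem sqrtDeg_mul_diagonal_inv :
    sqrtDeg W * diagonal (fun i => (deg W i)⁻¹) = invSqrtDeg W := by
  rw [invSqrtDeg, sqrtDeg, diagonal_mul_diagonal]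
  exact congrArg diagonal
    (funext fun i => by rw [← div_eq_mul_inv, Real.sqrt_div_self', one_div])

theorem normLap_eq_conj_one_sub_rwMat (hdeg : ∀ i, 0 < deg W i) :
    normLap W = sqrtDeg W * (1 - rwMat W) * invSqrtDeg W := by
  rw [Matrix.mul_sub, Matrix.mul_one, Matrix.sub_mul, sqrtDeg_mul_invSqrtDeg W hdeg, rwMat,
    ← Matrix.mul_assoc, sqrtDeg_mul_diagonal_inv, normLap]

end Graph

theorem rank_and_eigenvalue_one_general {N n : ℕ} (W : Matrix (Fin N) (Fin N) ℝ)
    (hdeg : ∀ i, 0 < deg W i)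
    (f : Fin N → Fin n) (hsurj : Function.Surjective f)
    (hsame : ∀ i j, f i = f j → ∀ k, W i k / deg W i = W j k / deg W j) :
    (rwMat W).rank ≤ n ∧
    N - n ≤ ((1 - rwMat W).charpoly).rootMultiplicity 1 ∧
    N - n ≤ ((normLap W).charpoly).rootMultiplicity 1 := by
  have hrank := rank_rwMat_le W f hsurj hsame
  have hmult : N - n ≤ ((1 - rwMat W).charpoly).rootMultiplicity 1 := by
    have := card_sub_rank_le_rootMultiplicity_scalar_sub (rwMat W) 1
    rw [map_one, Fintype.card_fin] at this
    omega
  refine ⟨hrank, hmult, ?_⟩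
  rwa [normLap_eq_conj_one_sub_rwMat W hdeg,
    charpoly_mul_mul_of_mul_eq_one _ _ _ (invSqrtDeg_mul_sqrtDeg W hdeg)]

/-- **Rank bound and multiplicity of eigenvalue 1.**
If nodes in the same part have equal normalized edge-weight vectors, then `D^{-1} W`
has rank at most `n`, and the random-walk Laplacian `I - D^{-1} W` (hence also the
normalized Laplacian) has eigenvalue `1` with multiplicity at least `N - n`. -/
theorem rank_and_eigenvalue_one {N n : ℕ} (W : Matrix (Fin N) (Fin N) ℝ)
    (hsymm : W.IsSymm) (hnonneg : ∀ i j, 0 ≤ W i j) (hdeg : ∀ i, 0 < deg W i)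
    (f : Fin N → Fin n) (hsurj : Function.Surjective f)
    (hsame : ∀ i j, f i = f j → ∀ k, W i k / deg W i = W j k / deg W j) :
    (rwMat W).rank ≤ n ∧
    N - n ≤ ((1 - rwMat W).charpoly).rootMultiplicity 1 ∧
    N - n ≤ ((normLap W).charpoly).rootMultiplicity 1 :=
  rank_and_eigenvalue_one_general W hdeg f hsurj hsame
end
end

section
/- Let W ∈ ℝ^{N×N} be a symmetric matrix with nonnegative entries and positive degrees, with normalized Laplacian L whose eigenvalues are λ(1) ≤ … ≤ λ(N), let C ∈ ℝ^{n×N} be the normalized coarsening matrix of a partition into n nonempty parts, and suppose the coarse normalized Laplacian satisfies L_c = C L Cᵀ with eigenvalues λ_c(1) ≤ … ≤ λ_c(n). Fix k ≤ n and let Ũ ∈ ℝ^{N×(n−k)} have as columns orthonormal eigenvectors of L for its n−k largest eigenvalues; set δ' = ‖(I_N − CᵀC) Ũ‖_F² and λ̃(j) = 2 − λ(N+1−j) for 1 ≤ j ≤ n−k. If δ' < 1, then Σ_{j=1}^{n−k} ((2 − λ(N+1−j)) − (2 − λ_c(n+1−j))) ≥ −(δ'·(2 + Σ_{j=1}^{n−k}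 λ̃(j)) + √(8 δ' Σ_{j=1}^{n−k} λ̃(j)))/(1 − δ'); equivalently, the tail eigenvalue gaps satisfy Σ_{j=k+1}^{n} (λ(j + N − n) − λ_c(j)) ≤ (δ'·(2 + Σ_{j=1}^{n−k} λ̃(j)) + √(8 δ' Σ_{j=1}^{n−k} λ̃(j)))/(1 − δ'). -/
open Matrix BigOperators

noncomputable section

/-!
Pass to the signless Laplacian `Q = 2 - L`, whose spectrum lies in `[0, 2]`: the eigenvectors `Ũ`
of the `n - k` largest eigenvalues of `L` span a bottom eigenspace of `Q`, and `C Q Cᵀ = 2 - L_c`.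
With `E = (1 - CᵀC) Ũ` the compressed block `B = C Ũ` has `BᵀB = 1 - EᵀE ≥ (1 - δ')`, so
orthonormalising its columns costs at most a factor `(1 - δ')⁻¹` on traces, and
`tr (Bᵀ (C Q Cᵀ) B) = tr ((Ũ - E)ᵀ Q (Ũ - E)) ≤ ∑ λ̃ + 2 √(2 δ' ∑ λ̃) + 2 δ'` by Cauchy–Schwarz
on the cross terms and `Q ≤ 2`. Ky Fan's maximum principle for `L_c` makes the trace of the
orthonormalised block an upper bound for `∑_{j > k} (2 - λ_c(j))`.
-/

lemma frobSq_nonneg {a b : ℕ} (M : Matrix (Fin a) (Fin b) ℝ) : 0 ≤ frobSq M := by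
  unfold frobSq; positivity

lemma frobSq_eq_trace {a b : ℕ} (M : Matrix (Fin a) (Fin b) ℝ) : frobSq M = (Mᵀ * M).trace := by
  simp only [frobSq, trace, diag, mul_apply, transpose_apply, sq]
  exact Finset.sum_comm

lemma frobSq_neg {a b : ℕ} (M : Matrix (Fin a) (Fin b) ℝ) : frobSq (-M) = frobSq M := by
  simp [frobSq]

lemma trace_transpose_mul_le {a b : ℕ} (A B : Matrix (Fin a) (Fin b) ℝ) :
    (Aᵀ * B).trace ≤ √(frobSq A) * √(frobSq B) := by
  have h := Real.sum_mul_le_sqrt_mul_sqrt Finset.univ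
    (fun p : Fin a × Fin b => A p.1 p.2) (fun p => B p.1 p.2)
  simp only [Fintype.sum_prod_type] at h
  simpa only [trace, diag, mul_apply, transpose_apply, frobSq, Finset.sum_comm (γ := Fin b)] using h

lemma posSemidef_frobSq_smul_one_sub_transpose_mul_self {a b : ℕ}
    (E : Matrix (Fin a) (Fin b) ℝ) :
    (frobSq E • (1 : Matrix (Fin b) (Fin b) ℝ) - Eᵀ * E).PosSemidef := by
  refine .of_dotProduct_mulVec_nonneg ?_ fun v => ?_
  · simp [IsHermitian, conjTranspose_eq_transpose_of_trivial, transpose_sub, transpose_mul]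
  · have hrow : ∀ i, (E *ᵥ v) i ^ 2 ≤ (∑ j, E i j ^ 2) * (v ⬝ᵥ v) := fun i => by
      simpa [mulVec, dotProduct, sq] using Finset.sum_mul_sq_le_sq_mul_sq Finset.univ (E i) v
    have hquad : star v ⬝ᵥ ((frobSq E • 1 - Eᵀ * E) *ᵥ v)
        = frobSq E * (v ⬝ᵥ v) - (E *ᵥ v) ⬝ᵥ (E *ᵥ v) := by
      simp [sub_mulVec, ← mulVec_mulVec, dotProduct_mulVec, vecMul_transpose, smul_mulVec]
    rw [hquad, sub_nonneg, frobSq, Finset.sum_mul]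
    simpa [dotProduct, sq] using Finset.sum_le_sum fun i _ => hrow i

lemma Real.inv_sqrt_mul_mul_inv_sqrt {a : ℝ} (ha : 0 ≤ a) (b : ℝ) :
    (√a)⁻¹ * b * (√a)⁻¹ = b / a := by
  rw [← Real.sq_sqrt ha, Real.sqrt_sq (Real.sqrt_nonneg a)]; ring

namespace Matrix

variable {ι κ : Type*} [Fintype ι] [Fintype κ]

theorem IsHermitian.exists_orthogonal_diagonalization [DecidableEq ι] {A : Matrix ι ι ℝ}
    (hA : A.IsHermitian) :
    ∃ P : Matrix ι ι ℝ, Pᵀ * P = 1 ∧ P * Pᵀ = 1 ∧ Pᵀ * A * P = diagonal hA.eigenvalues := by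
  set P : Matrix ι ι ℝ := (hA.eigenvectorUnitary : Matrix ι ι ℝ)
  have hstar : star P = Pᵀ := conjTranspose_eq_transpose_of_trivial _
  refine ⟨P, ?_, ?_, ?_⟩
  · rw [← hstar]; exact Unitary.star_mul_self_of_mem hA.eigenvectorUnitary.2
  · rw [← hstar]; exact Unitary.mul_star_self_of_mem hA.eigenvectorUnitary.2
  · simpa [hstar, star_eq_conjTranspose, conjTranspose_eq_transpose_of_trivial] using
      hA.conjStarAlgAut_star_eigenvectorUnitary

lemma sum_sq_le_one_of_transpose_mul_self_eq_one [DecidableEq ι] [DecidableEq κ]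
    {Y : Matrix ι κ ℝ} (hY : Yᵀ * Y = 1) (i : ι) : ∑ j, Y i j ^ 2 ≤ 1 := by
  have hidem : Y * Yᵀ * (Y * Yᵀ) = Y * Yᵀ := by
    rw [Matrix.mul_assoc, ← Matrix.mul_assoc Yᵀ, hY, Matrix.one_mul]
  have hpsd : (1 - Y * Yᵀ).PosSemidef := by
    have : 1 - Y * Yᵀ = (1 - Y * Yᵀ)ᴴ * (1 - Y * Yᵀ) := by
      simp only [conjTranspose_eq_transpose_of_trivial, transpose_sub, transpose_one,
        transpose_mul, transpose_transpose, sub_mul, mul_sub, hidem]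
      simp
    rw [this]
    exact posSemidef_conjTranspose_mul_self _
  simpa [mul_apply, sq] using hpsd.diag_nonneg (i := i)

lemma trace_transpose_mul_diagonal_mul [DecidableEq ι] (d : ι → ℝ) (Y : Matrix ι κ ℝ) :
    (Yᵀ * (diagonal d * Y)).trace = ∑ i, d i * ∑ j, Y i j ^ 2 := by
  simp only [trace, diag, mul_apply (N := diagonal d * Y), diagonal_mul, transpose_apply,
    Finset.mul_sum]
  rw [Finset.sum_comm]
  exact Finset.sum_congr rfl fun i _ => Finset.sum_congr rfl fun j _ => by ring

section EigenBlock

variable [DecidableEq κ] {L : Matrix ι ι ℝ} {Y : Matrix ι κ ℝ} {ν : κ → ℝ}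

lemma transpose_mul_mul_eq_diagonal (hY : Yᵀ * Y = 1) (hLY : L * Y = Y * diagonal ν) :
    Yᵀ * L * Y = diagonal ν := by
  rw [Matrix.mul_assoc, hLY, ← Matrix.mul_assoc, hY, Matrix.one_mul]

lemma trace_transpose_mul_mul_eq_sum (hY : Yᵀ * Y = 1) (hLY : L * Y = Y * diagonal ν) :
    (Yᵀ * L * Y).trace = ∑ j, ν j := by
  rw [transpose_mul_mul_eq_diagonal hY hLY, trace_diagonal]

lemma PosSemidef.nonneg_of_mul_eq_mul_diagonal (hL : L.PosSemidef) (hY : Yᵀ * Y = 1)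
    (hLY : L * Y = Y * diagonal ν) (j : κ) : 0 ≤ ν j := by
  have := hL.conjTranspose_mul_mul_same Y
  rw [conjTranspose_eq_transpose_of_trivial, transpose_mul_mul_eq_diagonal hY hLY] at this
  simpa using this.diag_nonneg (i := j)

lemma two_smul_one_sub_mul_eq [DecidableEq ι] (hLY : L * Y = Y * diagonal ν) :
    ((2 : ℝ) • 1 - L) * Y = Y * diagonal fun j => 2 - ν j := by
  rw [Matrix.sub_mul, hLY, Matrix.smul_mul, Matrix.one_mul]
  ext i j
  simp [mul_diagonal, mul_sub, mul_comm]

end EigenBlock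

lemma mul_submatrix_eq_submatrix_mul_diagonal [DecidableEq ι] [DecidableEq κ]
    {L U : Matrix ι ι ℝ} {μ : ι → ℝ} (h : L * U = U * diagonal μ) (g : κ → ι) :
    L * U.submatrix id g = U.submatrix id g * diagonal (μ ∘ g) := by
  ext i j
  calc (L * U.submatrix id g) i j = (L * U) i (g j) := rfl
    _ = _ := by simp [h, mul_diagonal]

lemma transpose_mul_self_mul_eq_one_sub {l : Type*} [DecidableEq ι] [DecidableEq κ]
    [DecidableEq l] {C : Matrix κ ι ℝ} (hC : C * Cᵀ = 1) {Y : Matrix ι l ℝ} (hY : Yᵀ * Y = 1) :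
    (C * Y)ᵀ * (C * Y) = 1 - ((1 - Cᵀ * C) * Y)ᵀ * ((1 - Cᵀ * C) * Y) := by
  have hproj : (1 - Cᵀ * C)ᵀ * (1 - Cᵀ * C) = 1 - Cᵀ * C := by
    simp only [transpose_sub, transpose_one, transpose_mul, transpose_transpose, Matrix.sub_mul,
      Matrix.mul_sub, Matrix.one_mul, Matrix.mul_one]
    rw [Matrix.mul_assoc, ← Matrix.mul_assoc C, hC, Matrix.one_mul]
    abel
  have hE : ((1 - Cᵀ * C) * Y)ᵀ * ((1 - Cᵀ * C) * Y) = 1 - (C * Y)ᵀ * (C * Y) := by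
    rw [transpose_mul, Matrix.mul_assoc, ← Matrix.mul_assoc _ _ Y, hproj, Matrix.sub_mul,
      Matrix.one_mul, Matrix.mul_sub, hY, transpose_mul]
    simp only [Matrix.mul_assoc]
  rw [hE, sub_sub_cancel]

/-- The witness is `B (BᵀB)^{-1/2}`, built in an eigenbasis of `BᵀB`. -/
theorem exists_orthonormal_trace_le [DecidableEq κ] (B : Matrix ι κ ℝ) {c : ℝ} (hc : 0 < c)
    (hB : (Bᵀ * B - c • 1).PosSemidef) :
    ∃ X : Matrix ι κ ℝ, Xᵀ * X = 1 ∧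
      ∀ A : Matrix ι ι ℝ, A.PosSemidef → (Xᵀ * A * X).trace ≤ c⁻¹ * (Bᵀ * A * B).trace := by
  have hG : (Bᵀ * B).IsHermitian := by
    simpa [conjTranspose_eq_transpose_of_trivial] using (posSemidef_conjTranspose_mul_self B).1
  obtain ⟨R, hRR, hRR', hGR⟩ := hG.exists_orthogonal_diagonalization
  set s := hG.eigenvalues
  have hs : ∀ i, c ≤ s i := fun i => by
    have hpsd : (diagonal s - c • 1).PosSemidef := by
      have := hB.conjTranspose_mul_mul_same R
      rwa [conjTranspose_eq_transpose_of_trivial, Matrix.mul_sub, Matrix.sub_mul,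
        Matrix.mul_smul, Matrix.mul_one, Matrix.smul_mul, hRR, hGR] at this
    simpa [sub_nonneg] using hpsd.diag_nonneg (i := i)
  set D := diagonal fun i => (√(s i))⁻¹
  have hDsD : D * diagonal s * D = 1 := by
    rw [diagonal_mul_diagonal, diagonal_mul_diagonal, ← diagonal_one]
    congr 1; funext i
    rw [Real.inv_sqrt_mul_mul_inv_sqrt (hc.trans_le (hs i)).le, div_self (hc.trans_le (hs i)).ne']
  refine ⟨B * R * D, ?_, fun A hA => ?_⟩
  · rw [← hDsD, ← hGR]
    simp only [transpose_mul, diagonal_transpose, D, Matrix.mul_assoc]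
  · have hG' := (hA.conjTranspose_mul_mul_same B).conjTranspose_mul_mul_same R
    simp only [conjTranspose_eq_transpose_of_trivial] at hG'
    set G := Rᵀ * (Bᵀ * A * B) * R
    have hX : (B * R * D)ᵀ * A * (B * R * D) = D * G * D := by
      simp only [G, transpose_mul, diagonal_transpose, D, Matrix.mul_assoc]
    have htrG : G.trace = (Bᵀ * A * B).trace := by
      rw [trace_mul_cycle, ← Matrix.mul_assoc, hRR', Matrix.one_mul]
    rw [hX, ← htrG, trace, trace, Finset.mul_sum]
    refine Finset.sum_le_sum fun i _ => ?_
    have hsi := hc.trans_le (hs i)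
    have hGi : 0 ≤ G i i := hG'.diag_nonneg
    simp only [diag, D, mul_diagonal, diagonal_mul]
    calc (√(s i))⁻¹ * G i i * (√(s i))⁻¹ = (s i)⁻¹ * G i i := by
          rw [Real.inv_sqrt_mul_mul_inv_sqrt hsi.le, div_eq_inv_mul]
      _ ≤ c⁻¹ * G i i := by gcongr; exact hs i

end Matrix

lemma sum_max_sub_eq_sum_top {k m : ℕ} {μ : Fin (k + m) → ℝ} (hμ : Monotone μ) (hm : 0 < m) :
    ∑ i, max (μ i - μ ⟨k, by omega⟩) 0 = ∑ t : Fin m, (μ (Fin.natAdd k t) - μ ⟨k, by omega⟩) := by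
  rw [Fin.sum_univ_add]
  have hlow : ∀ i : Fin k, max (μ (Fin.castAdd m i) - μ ⟨k, by omega⟩) 0 = 0 := fun i =>
    max_eq_right (sub_nonpos.mpr (hμ (Fin.le_def.mpr i.isLt.le)))
  have hhigh : ∀ t : Fin m, max (μ (Fin.natAdd k t) - μ ⟨k, by omega⟩) 0
      = μ (Fin.natAdd k t) - μ ⟨k, by omega⟩ := fun t =>
    max_eq_left (sub_nonneg.mpr (hμ (Fin.mk_le_mk.mpr (by simp))))
  simp only [hlow, hhigh, Finset.sum_const_zero, zero_add]

lemma sum_mul_le_sum_top_of_map_eq {n k m : ℕ} (hkm : k + m = n) {μ d w : Fin n → ℝ}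
    (hμ : Monotone μ) (hd : Finset.univ.val.map d = Finset.univ.val.map μ)
    (hw0 : ∀ i, 0 ≤ w i) (hw1 : ∀ i, w i ≤ 1) (hw : ∑ i, w i = m) :
    ∑ i, d i * w i ≤ ∑ t : Fin m, μ ⟨k + t, by omega⟩ := by
  subst hkm
  rcases Nat.eq_zero_or_pos m with rfl | hm
  · have hw_zero : ∀ i, w i = 0 := fun i =>
      (Finset.sum_eq_zero_iff_of_nonneg fun i _ => hw0 i).mp (by simpa using hw) i (by simp)
    simp [hw_zero]
  -- Threshold at `c = μ k`: `d w ≤ (d - c)⁺ + c w`, and `∑ (d - c)⁺` only sees the multiset of `d`.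
  set c := μ ⟨k, by omega⟩
  have hpt : ∀ i, d i * w i ≤ max (d i - c) 0 + c * w i := fun i => by
    rcases le_total (d i) c with h | h
    · nlinarith [hw0 i, le_max_right (d i - c) 0]
    · nlinarith [hw1 i, le_max_left (d i - c) 0]
  have hmax : ∑ i, max (d i - c) 0 = ∑ i, max (μ i - c) 0 := by
    rw [Finset.sum_eq_multiset_sum, Finset.sum_eq_multiset_sum]
    simpa only [Multiset.map_map, Function.comp_def] using
      congrArg (fun s => (s.map fun x => max (x - c) 0).sum) hd
  calc ∑ i, d i * w i ≤ ∑ i, (max (d i - c) 0 + c * w i) := Finset.sum_le_sum fun i _ => hpt i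
    _ = ∑ t : Fin m, (μ (Fin.natAdd k t) - c) + c * m := by
      rw [Finset.sum_add_distrib, hmax, sum_max_sub_eq_sum_top hμ hm, ← Finset.mul_sum, hw]
    _ = ∑ t : Fin m, μ ⟨k + t, by omega⟩ := by
      simp [Finset.sum_sub_distrib, Fin.natAdd, mul_comm]

lemma map_eigenvalues_eq_of_sortedEigs {n : ℕ} {A : Matrix (Fin n) (Fin n) ℝ}
    (hA : A.IsHermitian) {μ : Fin n → ℝ} (hμ : sortedEigs A μ) :
    Finset.univ.val.map hA.eigenvalues = Finset.univ.val.map μ := by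
  have h := congrArg Polynomial.roots hμ.2
  rw [hA.roots_charpoly_eq_eigenvalues, Polynomial.roots_prod _ _
    (by simp [Finset.prod_ne_zero_iff, Polynomial.X_sub_C_ne_zero])] at h
  simpa using h

/-- Ky Fan's maximum principle. -/
theorem trace_transpose_mul_mul_le_sum_top_eigs {n k m : ℕ} (hkm : k + m = n)
    {A : Matrix (Fin n) (Fin n) ℝ} (hA : A.IsHermitian) {μ : Fin n → ℝ} (hμ : sortedEigs A μ)
    {X : Matrix (Fin n) (Fin m) ℝ} (hX : Xᵀ * X = 1) :
    (Xᵀ * A * X).trace ≤ ∑ t : Fin m, μ ⟨k + t, by omega⟩ := by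
  obtain ⟨P, -, hPP, hAP⟩ := hA.exists_orthogonal_diagonalization
  set Y := Pᵀ * X
  have hY : Yᵀ * Y = 1 := by
    simp only [Y, transpose_mul, transpose_transpose, Matrix.mul_assoc]
    rw [← Matrix.mul_assoc P, hPP, Matrix.one_mul, hX]
  have htr : (Xᵀ * A * X).trace = ∑ i, hA.eigenvalues i * ∑ j, Y i j ^ 2 := by
    rw [← trace_transpose_mul_diagonal_mul, ← hAP]
    calc (Xᵀ * A * X).trace = (Xᵀ * (P * Pᵀ) * A * (P * Pᵀ) * X).trace := by
          rw [hPP, Matrix.mul_one, Matrix.mul_one]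
      _ = _ := by simp only [Y, transpose_mul, transpose_transpose, Matrix.mul_assoc]
  have hw : ∑ i, ∑ j, Y i j ^ 2 = (m : ℝ) := by
    rw [← frobSq, frobSq_eq_trace, hY, trace_one, Fintype.card_fin]
  rw [htr]
  exact sum_mul_le_sum_top_of_map_eq hkm hμ.1 (map_eigenvalues_eq_of_sortedEigs hA hμ)
    (fun i => by positivity) (sum_sq_le_one_of_transpose_mul_self_eq_one hY) hw

lemma frobSq_mul_le_two_mul_trace {N m : ℕ} {Q : Matrix (Fin N) (Fin N) ℝ}
    {Y : Matrix (Fin N) (Fin m) ℝ} {ν : Fin m → ℝ} (hY : Yᵀ * Y = 1)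
    (hQY : Q * Y = Y * diagonal ν) (hν0 : ∀ j, 0 ≤ ν j) (hν2 : ∀ j, ν j ≤ 2) :
    frobSq (Q * Y) ≤ 2 * (Yᵀ * Q * Y).trace := by
  rw [trace_transpose_mul_mul_eq_sum hY hQY, frobSq_eq_trace, hQY, transpose_mul,
    diagonal_transpose, Matrix.mul_assoc, ← Matrix.mul_assoc Yᵀ, hY, Matrix.one_mul,
    diagonal_mul_diagonal, trace_diagonal, Finset.mul_sum]
  exact Finset.sum_le_sum fun j _ => by nlinarith [hν0 j, hν2 j]

lemma trace_sub_transpose_mul_mul_sub_le {N m : ℕ} {Q : Matrix (Fin N) (Fin N) ℝ}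
    (hQ2 : ((2 : ℝ) • 1 - Q).PosSemidef) (Y E : Matrix (Fin N) (Fin m) ℝ)
    (hY : frobSq (Q * Y) ≤ 2 * (Yᵀ * Q * Y).trace) :
    ((Y - E)ᵀ * Q * (Y - E)).trace ≤
      (Yᵀ * Q * Y).trace + 2 * √(2 * (Yᵀ * Q * Y).trace * frobSq E) + 2 * frobSq E := by
  have hQ : Qᵀ = Q := by
    have := hQ2.isHermitian
    rwa [IsHermitian, conjTranspose_eq_transpose_of_trivial, transpose_sub, transpose_smul,
      transpose_one, sub_right_inj] at this
  set S := (Yᵀ * Q * Y).trace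
  set δ := frobSq E
  have hQY : √(frobSq (Q * Y)) * √δ ≤ √(2 * S * δ) := by
    rw [← Real.sqrt_mul (frobSq_nonneg _)]
    exact Real.sqrt_le_sqrt (mul_le_mul_of_nonneg_right hY (frobSq_nonneg E))
  have hcross₁ : -((Q * Y)ᵀ * E).trace ≤ √(frobSq (Q * Y)) * √δ := by
    simpa [frobSq_neg] using trace_transpose_mul_le (-(Q * Y)) E
  have hcross₂ : -(Eᵀ * (Q * Y)).trace ≤ √δ * √(frobSq (Q * Y)) := by
    simpa [frobSq_neg] using trace_transpose_mul_le (-E) (Q * Y)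
  have hEQE : (Eᵀ * Q * E).trace ≤ 2 * δ := by
    have := (hQ2.conjTranspose_mul_mul_same E).trace_nonneg
    rw [conjTranspose_eq_transpose_of_trivial, Matrix.mul_sub, Matrix.sub_mul, trace_sub,
      Matrix.mul_smul, Matrix.smul_mul, trace_smul, Matrix.mul_one, ← frobSq_eq_trace] at this
    simp only [smul_eq_mul] at this
    linarith
  have hexpand : ((Y - E)ᵀ * Q * (Y - E)).trace
      = S - ((Q * Y)ᵀ * E).trace - (Eᵀ * (Q * Y)).trace + (Eᵀ * Q * E).trace := by
    simp only [S, transpose_sub, Matrix.sub_mul, Matrix.mul_sub, trace_sub, transpose_mul, hQ,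
      Matrix.mul_assoc]
    ring
  rw [hexpand]
  linarith [mul_comm √δ √(frobSq (Q * Y))]

lemma trace_compress_eigenblock_le {N n m : ℕ} {Q : Matrix (Fin N) (Fin N) ℝ}
    (hQ2 : ((2 : ℝ) • 1 - Q).PosSemidef) (C : Matrix (Fin n) (Fin N) ℝ)
    {Y : Matrix (Fin N) (Fin m) ℝ} {ν : Fin m → ℝ} (hY : Yᵀ * Y = 1)
    (hQY : Q * Y = Y * diagonal ν) (hν0 : ∀ j, 0 ≤ ν j) (hν2 : ∀ j, ν j ≤ 2) :
    ((C * Y)ᵀ * (C * Q * Cᵀ) * (C * Y)).trace ≤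
      ∑ j, ν j + 2 * √(2 * (∑ j, ν j) * frobSq ((1 - Cᵀ * C) * Y))
        + 2 * frobSq ((1 - Cᵀ * C) * Y) := by
  have hCCY : Cᵀ * C * Y = Y - (1 - Cᵀ * C) * Y := by
    rw [Matrix.sub_mul, Matrix.one_mul, sub_sub_cancel]
  have hcompress : (C * Y)ᵀ * (C * Q * Cᵀ) * (C * Y) = (Cᵀ * C * Y)ᵀ * Q * (Cᵀ * C * Y) := by
    simp only [transpose_mul, transpose_transpose, Matrix.mul_assoc]
  rw [hcompress, hCCY, ← trace_transpose_mul_mul_eq_sum hY hQY]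
  exact trace_sub_transpose_mul_mul_sub_le hQ2 Y _ (frobSq_mul_le_two_mul_trace hY hQY hν0 hν2)

theorem sum_two_sub_top_eigs_sub_le {N n k m : ℕ} (hkm : k + m = n)
    {L : Matrix (Fin N) (Fin N) ℝ} (hL : L.PosSemidef) (hL2 : ((2 : ℝ) • 1 - L).PosSemidef)
    {C : Matrix (Fin n) (Fin N) ℝ} (hC : C * Cᵀ = 1)
    {μc : Fin n → ℝ} (hμc : sortedEigs (C * L * Cᵀ) μc)
    {Y : Matrix (Fin N) (Fin m) ℝ} (hY : Yᵀ * Y = 1) {ν : Fin m → ℝ}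
    (hLY : L * Y = Y * diagonal ν) {δ S : ℝ} (hδ : δ = frobSq ((1 - Cᵀ * C) * Y))
    (hδ1 : δ < 1) (hS : S = ∑ j, (2 - ν j)) :
    ∑ t : Fin m, (2 - μc ⟨k + t, by omega⟩) - S ≤ (δ * (2 + S) + √(8 * δ * S)) / (1 - δ) := by
  set Q : Matrix (Fin N) (Fin N) ℝ := (2 : ℝ) • 1 - L
  have hQY : Q * Y = Y * diagonal fun j => 2 - ν j := two_smul_one_sub_mul_eq hLY
  have hν0 := hL.nonneg_of_mul_eq_mul_diagonal hY hLY
  have hB : ((C * Y)ᵀ * (C * Y) - (1 - δ) • 1).PosSemidef := by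
    rw [transpose_mul_self_mul_eq_one_sub hC hY, hδ]
    convert posSemidef_frobSq_smul_one_sub_transpose_mul_self ((1 - Cᵀ * C) * Y) using 1
    module
  obtain ⟨X, hX, hXtr⟩ := exists_orthonormal_trace_le (C * Y) (by linarith) hB
  have hKyFan := trace_transpose_mul_mul_le_sum_top_eigs hkm
    (by simpa using (hL.mul_mul_conjTranspose_same C).isHermitian) hμc hX
  have hXQX : (Xᵀ * (C * Q * Cᵀ) * X).trace = 2 * m - (Xᵀ * (C * L * Cᵀ) * X).trace := by
    have hQc : C * Q * Cᵀ = (2 : ℝ) • 1 - C * L * Cᵀ := by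
      simp only [Q, Matrix.mul_sub, Matrix.sub_mul, Matrix.mul_smul, Matrix.smul_mul,
        Matrix.mul_one, hC]
    rw [hQc, Matrix.mul_sub, Matrix.sub_mul, Matrix.mul_smul, Matrix.smul_mul, Matrix.mul_one, hX,
      trace_sub, trace_smul, trace_one, Fintype.card_fin, smul_eq_mul]
  have hBQB := trace_compress_eigenblock_le (by simpa [Q] using hL) C hY hQY
    (hL2.nonneg_of_mul_eq_mul_diagonal hY hQY) fun j => by linarith [hν0 j]
  rw [← hS, ← hδ] at hBQB
  have hsqrt : √(8 * δ * S) = 2 * √(2 * S * δ) := by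
    rw [show 8 * δ * S = 2 ^ 2 * (2 * S * δ) by ring, Real.sqrt_mul (by norm_num),
      Real.sqrt_sq (by norm_num)]
  have hbound : (1 - δ) * ∑ t : Fin m, (2 - μc ⟨k + t, by omega⟩) ≤
      S + 2 * √(2 * S * δ) + 2 * δ := by
    rw [← le_inv_mul_iff₀ (by linarith)]
    simp only [Finset.sum_sub_distrib, Finset.sum_const, Finset.card_univ, Fintype.card_fin,
      nsmul_eq_mul]
    calc _ ≤ (Xᵀ * (C * Q * Cᵀ) * X).trace := by linarith
      _ ≤ _ := hXtr _ (by simpa using hL2.mul_mul_conjTranspose_same C)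
      _ ≤ _ := by gcongr
  rw [hsqrt, le_div_iff₀ (by linarith)]
  linear_combination hbound

section NormalizedLaplacian

variable {N : ℕ} {W : Matrix (Fin N) (Fin N) ℝ}

lemma Matrix.IsSymm.sum_sum_mul_sub_sq (hW : W.IsSymm) (y : Fin N → ℝ) {ε : ℝ}
    (hε : ε ^ 2 = 1) :
    ∑ i, ∑ j, W i j * (y i - ε * y j) ^ 2
      = 2 * (∑ i, ∑ j, W i j * y i ^ 2 - ε * ∑ i, ∑ j, W i j * (y i * y j)) := by
  have hswap : ∑ i, ∑ j, W i j * y j ^ 2 = ∑ i, ∑ j, W i j * y i ^ 2 := by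
    rw [Finset.sum_comm]
    exact Finset.sum_congr rfl fun i _ => Finset.sum_congr rfl fun j _ => by rw [hW.apply j i]
  have hexpand : ∀ i j, W i j * (y i - ε * y j) ^ 2
      = W i j * y i ^ 2 + W i j * y j ^ 2 - 2 * ε * (W i j * (y i * y j)) := fun i j => by
    linear_combination (W i j * y j ^ 2) * hε
  simp only [hexpand, Finset.sum_add_distrib, Finset.sum_sub_distrib, ← Finset.mul_sum, hswap]
  ring

lemma dotProduct_one_sub_smul_invSqrtDeg_mul_mul_mulVec (hdeg : ∀ i, 0 < deg W i) (ε : ℝ)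
    (x : Fin N → ℝ) :
    x ⬝ᵥ ((1 - ε • (invSqrtDeg W * W * invSqrtDeg W)) *ᵥ x)
      = ∑ i, ∑ j, W i j * (invSqrtDeg W *ᵥ x) i ^ 2
        - ε * ∑ i, ∑ j, W i j * ((invSqrtDeg W *ᵥ x) i * (invSqrtDeg W *ᵥ x) j) := by
  have hdx : ∀ i, (√(deg W i))⁻¹ ^ 2 * deg W i = 1 := fun i => by
    rw [inv_pow, Real.sq_sqrt (hdeg i).le, inv_mul_cancel₀ (hdeg i).ne']
  rw [sub_mulVec, one_mulVec, smul_mulVec, dotProduct_sub, dotProduct_smul, smul_eq_mul]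
  congr 2
  · refine Finset.sum_congr rfl fun i _ => ?_
    rw [← Finset.sum_mul, ← deg]
    simp only [invSqrtDeg, mulVec_diagonal]
    linear_combination (-x i ^ 2) * hdx i
  · simp only [invSqrtDeg, mulVec_diagonal]
    simp only [dotProduct, mulVec, mul_diagonal, diagonal_mul, Finset.mul_sum]
    exact Finset.sum_congr rfl fun i _ => Finset.sum_congr rfl fun j _ => by ring

lemma posSemidef_one_sub_smul_invSqrtDeg_mul_mul (hW : W.IsSymm) (hnonneg : ∀ i j, 0 ≤ W i j)
    (hdeg : ∀ i, 0 < deg W i) {ε : ℝ} (hε : ε ^ 2 = 1) :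
    (1 - ε • (invSqrtDeg W * W * invSqrtDeg W)).PosSemidef := by
  refine .of_dotProduct_mulVec_nonneg ?_ fun x => ?_
  · simp [IsHermitian, conjTranspose_eq_transpose_of_trivial, transpose_sub, transpose_mul,
      invSqrtDeg, hW.eq, Matrix.mul_assoc]
  · rw [star_trivial, dotProduct_one_sub_smul_invSqrtDeg_mul_mul_mulVec hdeg,
      ← mul_le_mul_iff_right₀ two_pos, mul_zero, ← hW.sum_sum_mul_sub_sq _ hε]
    exact Finset.sum_nonneg fun i _ => Finset.sum_nonneg fun j _ =>
      mul_nonneg (hnonneg i j) (sq_nonneg _)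

lemma posSemidef_normLap (hW : W.IsSymm) (hnonneg : ∀ i j, 0 ≤ W i j)
    (hdeg : ∀ i, 0 < deg W i) : (normLap W).PosSemidef := by
  simpa [normLap] using
    posSemidef_one_sub_smul_invSqrtDeg_mul_mul hW hnonneg hdeg (ε := 1) (by norm_num)

lemma posSemidef_two_smul_one_sub_normLap (hW : W.IsSymm) (hnonneg : ∀ i j, 0 ≤ W i j)
    (hdeg : ∀ i, 0 < deg W i) : ((2 : ℝ) • 1 - normLap W).PosSemidef := by
  convert posSemidef_one_sub_smul_invSqrtDeg_mul_mul hW hnonneg hdeg (ε := -1) (by norm_num) using 1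
  rw [normLap]; module

end NormalizedLaplacian

lemma coarsenMat_mul_transpose {N n : ℕ} {f : Fin N → Fin n} (hf : Function.Surjective f) :
    coarsenMat f * (coarsenMat f)ᵀ = 1 := by
  ext p q
  simp only [mul_apply, transpose_apply, coarsenMat, mul_ite, ite_mul, zero_mul, mul_zero]
  by_cases hpq : p = q
  · subst hpq
    have hsize : (0 : ℝ) < partSize f p := by
      obtain ⟨i, rfl⟩ := hf p
      exact_mod_cast Finset.card_pos.mpr ⟨i, by simp⟩
    simp only [one_apply_eq, ← ite_and, and_self]
    rw [← Finset.sum_filter, Finset.sum_const, nsmul_eq_mul, ← mul_inv,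
      Real.mul_self_sqrt hsize.le]
    exact mul_inv_cancel₀ hsize.ne'
  · rw [one_apply_ne hpq]
    exact Finset.sum_eq_zero fun i _ => by split_ifs with h1 h2 <;> simp_all


/-- **Tail eigenvalue gap bound via the signless Laplacian.**
For a consistent coarsening `L_c = C L Cᵀ` and `Ũ` the eigenvectors of `L` for its
`n - k` largest eigenvalues, with `δ' = ‖(I - CᵀC)Ũ‖_F² < 1` and
`λ̃(j) = 2 - λ(N+1-j)`, the tail gaps satisfy
`∑_{j=k+1}^{n} (λ(j+N-n) - λ_c(j)) ≤ (δ'(2 + ∑ λ̃) + √(8δ' ∑ λ̃))/(1 - δ')`. -/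
theorem tail_eigenvalue_gap_bound {N n k : ℕ} (hk : k ≤ n) (hnN : n ≤ N)
    (W : Matrix (Fin N) (Fin N) ℝ)
    (hsymm : W.IsSymm) (hnonneg : ∀ i j, 0 ≤ W i j) (hdeg : ∀ i, 0 < deg W i)
    (f : Fin N → Fin n) (hsurj : Function.Surjective f)
    (μ : Fin N → ℝ) (U : Matrix (Fin N) (Fin N) ℝ)
    (hUorth : Uᵀ * U = 1)
    (hdecomp : normLap W = U * Matrix.diagonal μ * Uᵀ)
    (hcons : normLap (coarse f W) = coarsenMat f * normLap W * (coarsenMat f)ᵀ)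
    (μc : Fin n → ℝ) (hμc : sortedEigs (normLap (coarse f W)) μc)
    (Ut : Matrix (Fin N) (Fin (n - k)) ℝ)
    (hUt : Ut = U.submatrix id
        (fun j : Fin (n - k) => ⟨N - (n - k) + j.1, by have := j.2; omega⟩))
    (δ' : ℝ) (hδ' : δ' = frobSq ((1 - (coarsenMat f)ᵀ * coarsenMat f) * Ut))
    (hδ'1 : δ' < 1)
    (S' : ℝ)
    (hS' : S' = ∑ j : Fin (n - k), (2 - μ ⟨N - 1 - j.1, by have := j.2; omega⟩)) :
    (∑ t : Fin (n - k),
        ((2 - μ ⟨N - 1 - t.1, by have := t.2; omega⟩) -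
          (2 - μc ⟨n - 1 - t.1, by have := t.2; omega⟩)) ≥
      -((δ' * (2 + S') + Real.sqrt (8 * δ' * S')) / (1 - δ'))) ∧
    (∑ t : Fin (n - k),
        (μ ⟨k + t.1 + N - n, by have := t.2; omega⟩ -
          μc ⟨k + t.1, by have := t.2; omega⟩) ≤
      (δ' * (2 + S') + Real.sqrt (8 * δ' * S')) / (1 - δ')) := by
  set g : Fin (n - k) → Fin N := fun j => ⟨N - (n - k) + j.1, by omega⟩
  have hY : Utᵀ * Ut = 1 := by
    rw [hUt, transpose_submatrix, ← submatrix_mul _ _ _ _ _ Function.bijective_id, hUorth,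
      submatrix_one _ fun a b h => Fin.ext (by simpa [g] using congrArg Fin.val h)]
  have hLY : normLap W * Ut = Ut * diagonal (μ ∘ g) := by
    rw [hUt]
    refine mul_submatrix_eq_submatrix_mul_diagonal ?_ g
    rw [hdecomp, Matrix.mul_assoc (U * diagonal μ), hUorth, Matrix.mul_one]
  have hS : S' = ∑ j, (2 - (μ ∘ g) j) := by
    rw [hS']
    exact Fintype.sum_equiv Fin.revPerm _ _ fun j => by
      simp only [Function.comp, g, Fin.revPerm_apply, Fin.val_rev]
      congr 3; omega
  rw [hcons] at hμc
  have key := sum_two_sub_top_eigs_sub_le (Nat.add_sub_cancel' hk)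
    (posSemidef_normLap hsymm hnonneg hdeg) (posSemidef_two_smul_one_sub_normLap hsymm hnonneg hdeg)
    (coarsenMat_mul_transpose hsurj) hμc hY hLY hδ' hδ'1 hS
  have htail : ∑ t : Fin (n - k), (μ ⟨k + t.1 + N - n, by omega⟩ - μc ⟨k + t.1, by omega⟩)
      = ∑ t : Fin (n - k), (2 - μc ⟨k + t.1, by omega⟩) - S' := by
    rw [hS, ← Finset.sum_sub_distrib]
    refine Finset.sum_congr rfl fun t _ => ?_
    rw [show (⟨k + t.1 + N - n, by omega⟩ : Fin N) = g t from Fin.ext (by simp only [g]; omega)]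
    simp only [Function.comp]
    ring
  have hhead : ∑ t : Fin (n - k),
        ((2 - μ ⟨N - 1 - t.1, by omega⟩) - (2 - μc ⟨n - 1 - t.1, by omega⟩))
      = -∑ t : Fin (n - k), (μ ⟨k + t.1 + N - n, by omega⟩ - μc ⟨k + t.1, by omega⟩) := by
    rw [← Finset.sum_neg_distrib]
    refine Fintype.sum_equiv Fin.revPerm _ _ fun t => ?_
    simp only [Fin.revPerm_apply, Fin.val_rev]
    rw [show (⟨k + (n - k - (t.1 + 1)) + N - n, by omega⟩ : Fin N) = ⟨N - 1 - t.1, by omega⟩ from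
        Fin.ext (by simp only; omega),
      show (⟨k + (n - k - (t.1 + 1)), by omega⟩ : Fin n) = ⟨n - 1 - t.1, by omega⟩ from
        Fin.ext (by simp only; omega)]
    ring
  exact ⟨by linarith, by linarith⟩
end
end
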